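/- arXiv:2312.13644 — 2 statements merged into one kernel-verified Lean document; each statement's English description precedes it below -/
import Mathlib

section
/- On any binary DAG with n vertices (every vertex has indegree at most 2) with a unique sink reachable from all vertices, the git bisect algorithm uses at most log₂(n)/log₂(3/2) queries in the worst case to identify the faulty vertex. -/
/-- A strategy is a binary decision tree: internal nodes are queried vertices,
leaves identify the faulty vertex. -/
inductive Strategy (V : Type) : Type where
  | leaf : V → Strategy V
  | node : V → Strategy V → Strategy V → Strategy V

namespace Strategy

/-- The worst-case number of queries of a strategy is the height of the tree. -/
def height {V : Type} : Strategy V → ℕ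
  | leaf _ => 0
  | node _ l r => 1 + max l.height r.height

open Classical in
/-- Running a strategy: `anc u v` means `u` is an ancestor of `v` (including `u = v`).
A query of `q` answers "bugged" (left subtree) iff the faulty vertex `f` is an ancestor
of `q`, and "clean" (right subtree) otherwise. The result is the vertex identified at
the reached leaf. -/
noncomputable def run {V : Type} (anc : V → V → Prop) : Strategy V → V → V
  | leaf v, _ => v
  | node q l r, f => if anc f q then run anc l f else run anc r f

end Strategy


/-- The score of `x` within the candidate set `C`: the minimum of the number of
candidates that are ancestors of `x` and the number that are not. -/
noncomputable def scoreIn {V : Type} (anc : V → V → Prop) (C : Set V) (x : V) : ℕ :=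
  min ((C ∩ {u | anc u x}).ncard) ((C \ {u | anc u x}).ncard)

/-- `IsGB anc C s`: the strategy `s` is a possible run of the git bisect algorithm on
the candidate set `C`.  At each step a candidate of maximum score is queried, and the
candidate set is restricted to the ancestors (bugged answer) or non-ancestors (clean
answer) of the queried vertex; the algorithm stops when a single candidate remains. -/
inductive IsGB {V : Type} (anc : V → V → Prop) : Set V → Strategy V → Prop where
  | leaf (v : V) : IsGB anc {v} (Strategy.leaf v)
  | node (C : Set V) (q : V) (l r : Strategy V)
      (hq : q ∈ C)
      (hmax : ∀ x ∈ C, scoreIn anc C x ≤ scoreIn anc C q)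
      (hl : IsGB anc (C ∩ {u | anc u q}) l)
      (hr : IsGB anc (C \ {u | anc u q}) r) :
      IsGB anc C (Strategy.node q l r)

/-!
Within a candidate set `C` of size `n` that is closed under paths and has a sink, let `a x`
count the candidates among the ancestors of `x`. Since `x` has at most two parents,
`a x ≤ 2 a w + 1` for some parent `w`, so climbing from the sink (where `a = n`) one reaches a
vertex with `(n - 1)/3 ≤ a ≤ 2n/3`. Hence the queried vertex has score at least `(n - 1)/3`
and either answer leaves at most `(2n + 1)/3` candidates. Both remaining sets are again
closed under paths with a sink (the queried vertex, resp. the old sink), so by induction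
`h` queries require `n ≥ (3/2)^h`.
-/

open Relation

section Ancestors

variable {V : Type} {E : V → V → Prop}

noncomputable def ancestorCount (E : V → V → Prop) (C : Set V) (x : V) : ℕ :=
  (C ∩ {u | ReflTransGen E u x}).ncard

def PathConvex (E : V → V → Prop) (C : Set V) : Prop :=
  ∀ ⦃u w x⦄, u ∈ C → x ∈ C → ReflTransGen E u w → ReflTransGen E w x → w ∈ C

lemma PathConvex.inter_ancestors {C : Set V} (hC : PathConvex E C) (q : V) :
    PathConvex E (C ∩ {u | ReflTransGen E u q}) :=
  fun _ _ _ hu hx huw hwx => ⟨hC hu.1 hx.1 huw hwx, hwx.trans hx.2⟩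

lemma PathConvex.diff_ancestors {C : Set V} (hC : PathConvex E C) (q : V) :
    PathConvex E (C \ {u | ReflTransGen E u q}) :=
  fun _ _ _ hu hx huw hwx => ⟨hC hu.1 hx.1 huw hwx, fun hwq => hu.2 (huw.trans hwq)⟩

variable [Fintype V]

lemma ancestorCount_lt_of_edge (hacyc : ∀ v : V, ¬ TransGen E v v) {C : Set V} {w x : V}
    (hx : x ∈ C) (hwx : E w x) : ancestorCount E C w < ancestorCount E C x := by
  refine Set.ncard_lt_ncard ⟨fun u hu => ⟨hu.1, hu.2.tail hwx⟩, fun hsub => ?_⟩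
  exact hacyc x (TransGen.tail' (hsub ⟨hx, ReflTransGen.refl⟩).2 hwx)

open Classical in
noncomputable def parentsIn (E : V → V → Prop) (C : Set V) (x : V) : Finset V :=
  Finset.univ.filter fun w => w ∈ C ∧ E w x

@[simp]
lemma mem_parentsIn {C : Set V} {w x : V} : w ∈ parentsIn E C x ↔ w ∈ C ∧ E w x := by
  simp [parentsIn]

lemma ancestorCount_le_one_add_sum_parentsIn {C : Set V} (hC : PathConvex E C) {x : V}
    (hx : x ∈ C) :
    ancestorCount E C x ≤ 1 + ∑ w ∈ parentsIn E C x, ancestorCount E C w := by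
  have hcover : C ∩ {u | ReflTransGen E u x} ⊆
      insert x (⋃ w ∈ parentsIn E C x, C ∩ {u | ReflTransGen E u w}) := by
    rintro u ⟨hu, hux⟩
    rcases hux.cases_tail with rfl | ⟨w, huw, hwx⟩
    · exact Set.mem_insert _ _
    · have hw : w ∈ C := hC hu hx huw (ReflTransGen.single hwx)
      exact Set.mem_insert_of_mem _ (Set.mem_biUnion (by simp [hw, hwx]) ⟨hu, huw⟩)
  calc ancestorCount E C x
      ≤ (⋃ w ∈ parentsIn E C x, C ∩ {u | ReflTransGen E u w}).ncard + 1 :=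
        (Set.ncard_le_ncard hcover (Set.toFinite _)).trans (Set.ncard_insert_le _ _)
    _ ≤ 1 + ∑ w ∈ parentsIn E C x, ancestorCount E C w := by
        rw [add_comm]; gcongr; exact Finset.set_ncard_biUnion_le _ _

lemma card_parentsIn_le_two (hbin : ∀ v : V, {u | E u v}.ncard ≤ 2) (C : Set V) (x : V) :
    (parentsIn E C x).card ≤ 2 := by
  rw [← Set.ncard_coe_finset]
  exact (Set.ncard_le_ncard (fun w hw => (mem_parentsIn.mp hw).2) (Set.toFinite _)).trans
    (hbin x)

lemma exists_parent_ancestorCount_ge (hbin : ∀ v : V, {u | E u v}.ncard ≤ 2) {C : Set V}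
    (hC : PathConvex E C) {x : V} (hx : x ∈ C) (h2 : 2 ≤ ancestorCount E C x) :
    ∃ w ∈ C, E w x ∧ ancestorCount E C x ≤ 2 * ancestorCount E C w + 1 := by
  have hsum := ancestorCount_le_one_add_sum_parentsIn hC hx
  have hne : (parentsIn E C x).Nonempty := by
    by_contra hempty
    rw [Finset.not_nonempty_iff_eq_empty.mp hempty, Finset.sum_empty] at hsum
    omega
  obtain ⟨w, hwP, hmax⟩ := Finset.exists_max_image _ (ancestorCount E C) hne
  obtain ⟨hw, hwx⟩ := mem_parentsIn.mp hwP
  refine ⟨w, hw, hwx, ?_⟩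
  calc ancestorCount E C x
      ≤ 1 + (parentsIn E C x).card * ancestorCount E C w := by
        simpa using hsum.trans (by gcongr; exact Finset.sum_le_card_nsmul _ _ _ hmax)
    _ ≤ 1 + 2 * ancestorCount E C w := by gcongr; exact card_parentsIn_le_two hbin C x
    _ = 2 * ancestorCount E C w + 1 := add_comm _ _

/-- Stepping to a parent of largest ancestor count keeps more than half of the count, so
climbing from `x` cannot jump over the window `[(n-1)/3, 2n/3]`. -/
lemma exists_ancestorCount_mem_window (hacyc : ∀ v : V, ¬ TransGen E v v)
    (hbin : ∀ v : V, {u | E u v}.ncard ≤ 2) {C : Set V} (hC : PathConvex E C)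
    (hn : 2 ≤ C.ncard) {x : V} (hx : x ∈ C) (hlow : C.ncard ≤ 3 * ancestorCount E C x + 1) :
    ∃ z ∈ C, C.ncard ≤ 3 * ancestorCount E C z + 1 ∧ 3 * ancestorCount E C z ≤ 2 * C.ncard := by
  induction hk : ancestorCount E C x using Nat.strong_induction_on generalizing x with
  | _ k ih =>
    by_cases hhigh : 3 * k ≤ 2 * C.ncard
    · exact ⟨x, hx, hk ▸ hlow, hk ▸ hhigh⟩
    obtain ⟨w, hw, hwx, hxw⟩ := exists_parent_ancestorCount_ge hbin hC hx (by omega)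
    exact ih _ (hk ▸ ancestorCount_lt_of_edge hacyc hx hwx) hw (by omega) rfl

lemma exists_scoreIn_ge (hacyc : ∀ v : V, ¬ TransGen E v v)
    (hbin : ∀ v : V, {u | E u v}.ncard ≤ 2) {C : Set V} (hC : PathConvex E C)
    {t : V} (ht : t ∈ C) (hsink : ∀ u ∈ C, ReflTransGen E u t) (hn : 2 ≤ C.ncard) :
    ∃ z ∈ C, C.ncard ≤ 3 * scoreIn (fun u v => ReflTransGen E u v) C z + 1 := by
  have hall : ancestorCount E C t = C.ncard :=
    congrArg Set.ncard (Set.inter_eq_self_of_subset_left hsink)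
  obtain ⟨z, hz, hlow, hhigh⟩ :=
    exists_ancestorCount_mem_window hacyc hbin hC hn ht (by omega)
  refine ⟨z, hz, ?_⟩
  have hsplit := Set.ncard_inter_add_ncard_sdiff_eq_ncard C {u | ReflTransGen E u z}
  simp only [scoreIn]
  unfold ancestorCount at hlow hhigh
  omega

end Ancestors

lemma IsGB.nonempty {V : Type} {anc : V → V → Prop} {C : Set V} {s : Strategy V}
    (h : IsGB anc C s) : C.Nonempty := by
  cases h with
  | leaf v => exact Set.singleton_nonempty v
  | node _ q _ _ hq => exact ⟨q, hq⟩

/-- If `m` candidates remain after a git bisect query on `n ≥ 2` candidates, then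
`3 m ≤ 2 n + 1`, i.e. `⌊3 m / 2⌋ ≤ n`; iterating bounds from below the number of candidates
on which git bisect can need `h` queries. -/
def bisectMinCard : ℕ → ℕ
  | 0 => 1
  | h + 1 => max 2 (3 * bisectMinCard h / 2)

lemma bisectMinCard_succ_le {h m n : ℕ} (hm : bisectMinCard h ≤ m) (hn : 2 ≤ n)
    (hmn : 3 * m ≤ 2 * n + 1) : bisectMinCard (h + 1) ≤ n := by
  simp only [bisectMinCard, max_le_iff]
  omega

/-- The rounding in `bisectMinCard` costs `1/2` per step, which the surplus `2 ^ h` over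
`3 ^ h` absorbs once it has appeared (at `h = 5`). -/
lemma three_pow_add_two_pow_le_two_pow_mul_bisectMinCard {h : ℕ} (hh : 5 ≤ h) :
    3 ^ h + 2 ^ h ≤ 2 ^ h * bisectMinCard h := by
  induction h, hh using Nat.le_induction with
  | base => decide
  | succ h _ ih =>
    have hstep : 3 * bisectMinCard h ≤ 2 * bisectMinCard (h + 1) + 1 := by
      simp only [bisectMinCard]
      omega
    calc 3 ^ (h + 1) + 2 ^ (h + 1) = 3 * (3 ^ h + 2 ^ h) - 2 ^ h := by
          rw [pow_succ, pow_succ]; omega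
      _ ≤ 2 ^ h * (3 * bisectMinCard h) - 2 ^ h := by
          rw [mul_left_comm]; exact Nat.sub_le_sub_right (Nat.mul_le_mul_left 3 ih) _
      _ ≤ 2 ^ h * (2 * bisectMinCard (h + 1) + 1) - 2 ^ h := by gcongr
      _ = 2 ^ (h + 1) * bisectMinCard (h + 1) := by rw [pow_succ]; ring_nf; omega

lemma three_pow_le_two_pow_mul_bisectMinCard (h : ℕ) : 3 ^ h ≤ 2 ^ h * bisectMinCard h := by
  rcases lt_or_ge h 5 with hh | hh
  · interval_cases h <;> decide
  · exact (Nat.le_add_right _ _).trans (three_pow_add_two_pow_le_two_pow_mul_bisectMinCard hh)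

lemma IsGB.bisectMinCard_height_le {V : Type} [Fintype V] {E : V → V → Prop}
    (hacyc : ∀ v : V, ¬ TransGen E v v) (hbin : ∀ v : V, {u | E u v}.ncard ≤ 2)
    {C : Set V} {s : Strategy V} (hs : IsGB (fun u v => ReflTransGen E u v) C s)
    (hC : PathConvex E C) {t : V} (ht : t ∈ C) (hsink : ∀ u ∈ C, ReflTransGen E u t) :
    bisectMinCard s.height ≤ C.ncard := by
  induction hs generalizing t with
  | leaf v => simp [Strategy.height, bisectMinCard]
  | node C q l r hq hmax hl hr ihl ihr =>
    have hsplit := Set.ncard_inter_add_ncard_sdiff_eq_ncard C {u | ReflTransGen E u q}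
    have hl1 := (Set.ncard_pos (Set.toFinite _)).mpr hl.nonempty
    have hr1 := (Set.ncard_pos (Set.toFinite _)).mpr hr.nonempty
    obtain ⟨z, hz, hscore⟩ := exists_scoreIn_ge hacyc hbin hC ht hsink (by omega)
    have hq3 : C.ncard ≤ 3 * scoreIn (fun u v => ReflTransGen E u v) C q + 1 := by
      have := hmax z hz
      omega
    simp only [scoreIn] at hq3
    have htq : ¬ ReflTransGen E t q := fun htq' =>
      let ⟨_, hu⟩ := hr.nonempty; hu.2 ((hsink _ hu.1).trans htq')
    have hlh : bisectMinCard (l.height + 1) ≤ C.ncard := bisectMinCard_succ_le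
      (ihl (hC.inter_ancestors q) ⟨hq, .refl⟩ fun _ hu => hu.2) (by omega) (by omega)
    have hrh : bisectMinCard (r.height + 1) ≤ C.ncard := bisectMinCard_succ_le
      (ihr (hC.diff_ancestors q) ⟨ht, htq⟩ fun _ hu => hsink _ hu.1) (by omega) (by omega)
    rw [Strategy.height, add_comm]
    rcases max_choice l.height r.height with h | h <;> rw [h] <;> assumption

theorem gitbisect_binary_bound_general {V : Type} [Fintype V] (E : V → V → Prop)
    (hacyc : ∀ v : V, ¬ Relation.TransGen E v v)
    (hbin : ∀ v : V, {u | E u v}.ncard ≤ 2)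
    (b : V) (hb : ∀ v : V, Relation.ReflTransGen E v b)
    (s : Strategy V)
    (hs : IsGB (fun u v => Relation.ReflTransGen E u v) Set.univ s) :
    (s.height : ℝ) ≤ Real.logb 2 (Fintype.card V) / Real.logb 2 (3 / 2) := by
  have hcard : bisectMinCard s.height ≤ Fintype.card V := by
    simpa using hs.bisectMinCard_height_le hacyc hbin (fun _ _ _ _ _ _ _ => trivial)
      (Set.mem_univ b) fun u _ => hb u
  have hpow : ((3 : ℝ) / 2) ^ s.height ≤ Fintype.card V := by
    rw [div_pow, div_le_iff₀ (by positivity)]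
    exact_mod_cast (three_pow_le_two_pow_mul_bisectMinCard s.height).trans
      (by rw [mul_comm]; gcongr)
  rw [le_div_iff₀ (Real.logb_pos one_lt_two (by norm_num)), ← Real.logb_pow]
  exact Real.logb_le_logb_of_le one_lt_two (by positivity) hpow

/-- On any binary DAG with `n` vertices and a unique sink reachable from all vertices,
every run of the git bisect algorithm uses at most `log₂ n / log₂ (3/2)` queries in the
worst case. -/
theorem gitbisect_binary_bound {V : Type} [Fintype V] [Nonempty V] (E : V → V → Prop)
    (hacyc : ∀ v : V, ¬ Relation.TransGen E v v)
    (hbin : ∀ v : V, {u | E u v}.ncard ≤ 2)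
    (b : V) (hb : ∀ v : V, Relation.ReflTransGen E v b)
    (s : Strategy V)
    (hs : IsGB (fun u v => Relation.ReflTransGen E u v) Set.univ s) :
    (s.height : ℝ) ≤ Real.logb 2 (Fintype.card V) / Real.logb 2 (3 / 2) :=
  gitbisect_binary_bound_general E hacyc hbin b hb s hs
end

section
/- Define F'_i as a new sink with a single parent equal to the sink of a Fibonacci tree F_i. For every i ≥ 2, there exist strategies solving the Regression Search Problem on F_i and on F'_{i−1} using at most i − 1 queries in the worst case. -/
/-- Shapes of rooted in-trees: a single vertex, a sink with one parent subtree, or a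
sink with two parent subtrees. -/
inductive ITree : Type where
  | leaf : ITree
  | node1 : ITree → ITree
  | node2 : ITree → ITree → ITree

/-- The vertices of an in-tree shape. -/
def Pos : ITree → Type
  | .leaf => PUnit
  | .node1 t => Pos t ⊕ PUnit
  | .node2 t s => (Pos t ⊕ Pos s) ⊕ PUnit

def posFintype : ∀ t : ITree, Fintype (Pos t)
  | .leaf => inferInstanceAs (Fintype PUnit)
  | .node1 t =>
      letI := posFintype t
      inferInstanceAs (Fintype (Pos t ⊕ PUnit))
  | .node2 t s =>
      letI := posFintype t
      letI := posFintype s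
      inferInstanceAs (Fintype ((Pos t ⊕ Pos s) ⊕ PUnit))

attribute [instance] posFintype

/-- The sink (root) of an in-tree. -/
def sinkOf : ∀ t : ITree, Pos t
  | .leaf => PUnit.unit
  | .node1 _ => Sum.inr PUnit.unit
  | .node2 _ _ => Sum.inr PUnit.unit

/-- The arcs of an in-tree: all arcs are directed towards the sink. -/
def edgeOf : ∀ t : ITree, Pos t → Pos t → Prop
  | .node1 t, .inl a, .inl b => edgeOf t a b
  | .node1 t, .inl a, .inr _ => a = sinkOf t
  | .node2 t _, .inl (.inl a), .inl (.inl b) => edgeOf t a b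
  | .node2 _ s, .inl (.inr a), .inl (.inr b) => edgeOf s a b
  | .node2 t _, .inl (.inl a), .inr _ => a = sinkOf t
  | .node2 _ s, .inl (.inr a), .inr _ => a = sinkOf s
  | _, _, _ => False

/-- The `i`-th Fibonacci tree `F_i` (indices `i ≥ 1`; `FibTree 0` is a dummy value):
`F₁` is a single vertex, `F₂` is a single arc, and `F_{i+1}` is a sink whose two parents
are the sinks of disjoint copies of `F_i` and `F_{i-1}`. -/
def FibTree : ℕ → ITree
  | 0 => .leaf
  | 1 => .leaf
  | 2 => .node1 .leaf
  | (n + 3) => .node2 (FibTree (n + 2)) (FibTree (n + 1))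

/-!
Querying the sink of the larger parent subtree of `F_{i+1}` either reports it faulty, leaving a
copy of `F_i`, or clean, leaving `F_{i-1}` together with the sink below it, i.e. a copy of
`F'_{i-1}`. Likewise querying the sink of `F_i` inside `F'_i` leaves either `F_i` or the single new
sink. So both families need one more query per level, and induction from `F_2 = F'_1` (one
query) gives `i - 1` queries.
-/

open Relation Function

namespace Relation

variable {α β : Type*} {r : β → β → Prop} {g : α → β}

theorem ReflTransGen.exists_comap_of_range_closed (hg : ∀ x a, r x (g a) → ∃ a', g a' = x)
    {x : β} {b : α} (h : ReflTransGen r x (g b)) :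
    ∃ a, g a = x ∧ ReflTransGen (r on g) a b := by
  induction h using ReflTransGen.head_induction_on with
  | refl => exact ⟨b, rfl, .refl⟩
  | head hxy _ ih =>
    obtain ⟨a, rfl, ha⟩ := ih
    obtain ⟨a', rfl⟩ := hg _ _ hxy
    exact ⟨a', rfl, .head hxy ha⟩

theorem reflTransGen_comap_iff_of_range_closed (hinj : Injective g)
    (hg : ∀ x a, r x (g a) → ∃ a', g a' = x) {a b : α} :
    ReflTransGen r (g a) (g b) ↔ ReflTransGen (r on g) a b := by
  refine ⟨fun h => ?_, ReflTransGen.lift g (fun _ _ => id) _ _⟩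
  obtain ⟨a', ha', h'⟩ := h.exists_comap_of_range_closed hg
  rwa [← hinj ha']

theorem not_reflTransGen_of_range_closed (hg : ∀ x a, r x (g a) → ∃ a', g a' = x)
    {x : β} (hx : ∀ a, g a ≠ x) {b : α} : ¬ ReflTransGen r x (g b) := fun h =>
  let ⟨a, ha, _⟩ := h.exists_comap_of_range_closed hg
  hx a ha

end Relation

namespace Strategy

variable {V W : Type}

def map (g : V → W) : Strategy V → Strategy W
  | leaf v => leaf (g v)
  | node q l r => node (g q) (map g l) (map g r)

@[simp]
theorem height_map (g : V → W) (s : Strategy V) : (s.map g).height = s.height := by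
  induction s with
  | leaf => rfl
  | node _ _ _ ihl ihr => simp only [map, height, ihl, ihr]

theorem run_map {anc : W → W → Prop} {anc' : V → V → Prop} (g : V → W) (s : Strategy V)
    {f : V} (hf : ∀ q, anc (g f) (g q) ↔ anc' f q) :
    (s.map g).run anc (g f) = g (s.run anc' f) := by
  induction s with
  | leaf => rfl
  | node q _ _ ihl ihr =>
    by_cases hq : anc' f q
    · simp only [map, run, if_pos hq, if_pos ((hf q).2 hq), ihl]
    · simp only [map, run, if_neg hq, if_neg (mt (hf q).1 hq), ihr]

end Strategy

def SolvableWithin {V : Type} (anc : V → V → Prop) (k : ℕ) : Prop :=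
  ∃ s : Strategy V, (∀ f, s.run anc f = f) ∧ s.height ≤ k

namespace SolvableWithin

variable {V : Type} {anc : V → V → Prop}

theorem of_unique [Unique V] : SolvableWithin anc 0 :=
  ⟨.leaf default, fun f => (Unique.eq_default f).symm, le_rfl⟩

theorem mono {k k' : ℕ} (h : SolvableWithin anc k) (hk : k ≤ k') : SolvableWithin anc k' :=
  let ⟨s, hs, hsk⟩ := h
  ⟨s, hs, hsk.trans hk⟩

theorem of_split {VL VR : Type} {ancL : VL → VL → Prop} {ancR : VR → VR → Prop}
    {k : ℕ} (gL : VL → V) (gR : VR → V) (q : V)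
    (hcover : ∀ f, (∃ a, gL a = f) ∨ ∃ b, gR b = f)
    (hL : ∀ a a', anc (gL a) (gL a') ↔ ancL a a')
    (hR : ∀ b b', anc (gR b) (gR b') ↔ ancR b b')
    (hqL : ∀ a, anc (gL a) q) (hqR : ∀ b, ¬ anc (gR b) q)
    (sL : SolvableWithin ancL k) (sR : SolvableWithin ancR k) : SolvableWithin anc (k + 1) := by
  obtain ⟨sL, hsL, hkL⟩ := sL
  obtain ⟨sR, hsR, hkR⟩ := sR
  refine ⟨.node q (sL.map gL) (sR.map gR), ?_, ?_⟩
  · intro f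
    rcases hcover f with ⟨a, rfl⟩ | ⟨b, rfl⟩
    · rw [Strategy.run, if_pos (hqL a), Strategy.run_map gL sL (hL a), hsL]
    · rw [Strategy.run, if_neg (hqR b), Strategy.run_map gR sR (hR b), hsR]
  · simp only [Strategy.height, Strategy.height_map]
    omega

end SolvableWithin

theorem reflTransGen_sinkOf : ∀ (t : ITree) (v : Pos t), ReflTransGen (edgeOf t) v (sinkOf t)
  | .leaf, .unit | .node1 _, .inr .unit | .node2 _ _, .inr .unit => .refl
  | .node1 t, .inl a =>
    .tail (.lift Sum.inl (fun _ _ => id) _ _ (reflTransGen_sinkOf t a)) rfl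
  | .node2 t _, .inl (.inl a) =>
    .tail (.lift (Sum.inl ∘ Sum.inl) (fun _ _ => id) _ _ (reflTransGen_sinkOf t a)) rfl
  | .node2 _ s, .inl (.inr a) =>
    .tail (.lift (Sum.inl ∘ Sum.inr) (fun _ _ => id) _ _ (reflTransGen_sinkOf s a)) rfl

section Ancestry

variable {t s : ITree}

theorem exists_inl_of_edgeOf_node1 :
    ∀ (x : Pos (.node1 t)) (a : Pos t), edgeOf (.node1 t) x (.inl a) → ∃ a', .inl a' = x
  | .inl x, _, _ => ⟨x, rfl⟩
  | .inr _, _, h => (h : False).elim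

theorem exists_inl_inl_of_edgeOf_node2 :
    ∀ (x : Pos (.node2 t s)) (a : Pos t), edgeOf (.node2 t s) x (.inl (.inl a)) →
      ∃ a', .inl (.inl a') = x
  | .inl (.inl x), _, _ => ⟨x, rfl⟩
  | .inl (.inr _), _, h | .inr _, _, h => (h : False).elim

theorem exists_inl_inr_of_edgeOf_node2 :
    ∀ (x : Pos (.node2 t s)) (a : Pos s), edgeOf (.node2 t s) x (.inl (.inr a)) →
      ∃ a', .inl (.inr a') = x
  | .inl (.inr x), _, _ => ⟨x, rfl⟩
  | .inl (.inl _), _, h | .inr _, _, h => (h : False).elim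

theorem reflTransGen_edgeOf_node1_inl_iff {a b : Pos t} :
    ReflTransGen (edgeOf (.node1 t)) (.inl a) (.inl b) ↔ ReflTransGen (edgeOf t) a b :=
  reflTransGen_comap_iff_of_range_closed Sum.inl_injective exists_inl_of_edgeOf_node1

theorem reflTransGen_edgeOf_node2_inl_inl_iff {a b : Pos t} :
    ReflTransGen (edgeOf (.node2 t s)) (.inl (.inl a)) (.inl (.inl b)) ↔
      ReflTransGen (edgeOf t) a b :=
  reflTransGen_comap_iff_of_range_closed (Sum.inl_injective.comp Sum.inl_injective)
    exists_inl_inl_of_edgeOf_node2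

theorem reflTransGen_edgeOf_node2_inl_inr_iff {a b : Pos s} :
    ReflTransGen (edgeOf (.node2 t s)) (.inl (.inr a)) (.inl (.inr b)) ↔
      ReflTransGen (edgeOf s) a b :=
  reflTransGen_comap_iff_of_range_closed (Sum.inl_injective.comp Sum.inr_injective)
    exists_inl_inr_of_edgeOf_node2

end Ancestry

theorem solvableWithin_node1 {t : ITree} {k : ℕ}
    (h : SolvableWithin (ReflTransGen (edgeOf t)) k) :
    SolvableWithin (ReflTransGen (edgeOf (.node1 t))) (k + 1) :=
  SolvableWithin.of_split (ancR := fun _ _ : PUnit => True) Sum.inl Sum.inr (.inl (sinkOf t))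
    (by rintro (a | b); exacts [.inl ⟨a, rfl⟩, .inr ⟨b, rfl⟩])
    (fun _ _ => reflTransGen_edgeOf_node1_inl_iff)
    (fun _ _ => iff_of_true .refl trivial)
    (fun a => reflTransGen_edgeOf_node1_inl_iff.2 (reflTransGen_sinkOf t a))
    (fun _ => not_reflTransGen_of_range_closed exists_inl_of_edgeOf_node1
      fun _ => Sum.inl_ne_inr)
    h (SolvableWithin.of_unique.mono k.zero_le)

theorem solvableWithin_node2 {t s : ITree} {k : ℕ}
    (ht : SolvableWithin (ReflTransGen (edgeOf t)) k)
    (hs : SolvableWithin (ReflTransGen (edgeOf (.node1 s))) k) :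
    SolvableWithin (ReflTransGen (edgeOf (.node2 t s))) (k + 1) := by
  refine SolvableWithin.of_split (Sum.inl ∘ Sum.inl)
    (Sum.elim (Sum.inl ∘ Sum.inr) Sum.inr : Pos (.node1 s) → Pos (.node2 t s))
    (.inl (.inl (sinkOf t))) ?_ (fun _ _ => reflTransGen_edgeOf_node2_inl_inl_iff) ?_
    (fun a => reflTransGen_edgeOf_node2_inl_inl_iff.2 (reflTransGen_sinkOf t a)) ?_ ht hs
  · rintro ((a | b) | u)
    exacts [.inl ⟨a, rfl⟩, .inr ⟨.inl b, rfl⟩, .inr ⟨.inr u, rfl⟩]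
  · rintro (a | u) (b | u')
    · exact reflTransGen_edgeOf_node2_inl_inr_iff.trans reflTransGen_edgeOf_node1_inl_iff.symm
    · exact iff_of_true (reflTransGen_sinkOf _ _) (reflTransGen_sinkOf _ _)
    · exact iff_of_false
        (not_reflTransGen_of_range_closed exists_inl_inr_of_edgeOf_node2 fun _ => Sum.inl_ne_inr)
        (not_reflTransGen_of_range_closed exists_inl_of_edgeOf_node1 fun _ => Sum.inl_ne_inr)
    · exact iff_of_true .refl .refl
  · refine fun b => not_reflTransGen_of_range_closed exists_inl_inl_of_edgeOf_node2 ?_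
    rcases b with b | u
    exacts [fun _ h => Sum.inl_ne_inr (Sum.inl_injective h), fun _ => Sum.inl_ne_inr]

theorem solvableWithin_fibTree (n : ℕ) :
    SolvableWithin (ReflTransGen (edgeOf (FibTree (n + 2)))) (n + 1) ∧
      SolvableWithin (ReflTransGen (edgeOf (.node1 (FibTree (n + 1))))) (n + 1) := by
  induction n with
  | zero =>
    have hleaf : SolvableWithin (ReflTransGen (edgeOf .leaf)) 0 :=
      SolvableWithin.of_unique (V := PUnit)
    exact ⟨solvableWithin_node1 hleaf, solvableWithin_node1 hleaf⟩
  | succ n ih => exact ⟨solvableWithin_node2 ih.1 ih.2, solvableWithin_node1 ih.1⟩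

/-- For every `i ≥ 2` there are strategies solving the Regression Search Problem on
`F_i` and on `F'_{i-1}` (a new sink whose single parent is the sink of `F_{i-1}`,
here `ITree.node1 (FibTree (i-1))`) using at most `i - 1` queries in the worst case. -/
theorem fibtree_strategies (i : ℕ) (hi : 2 ≤ i) :
    (∃ s : Strategy (Pos (FibTree i)),
      (∀ f, s.run (fun u v => Relation.ReflTransGen (edgeOf (FibTree i)) u v) f = f) ∧
      s.height ≤ i - 1) ∧
    (∃ s : Strategy (Pos (ITree.node1 (FibTree (i - 1)))),
      (∀ f, s.run
          (fun u v => Relation.ReflTransGen (edgeOf (ITree.node1 (FibTree (i - 1)))) u v)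
          f = f) ∧
      s.height ≤ i - 1) := by
  obtain ⟨n, rfl⟩ := Nat.exists_eq_add_of_le' hi
  exact solvableWithin_fibTree n
end
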